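/- (Probabilistic content of Theorem 6, learning from succinct natural proofs.) Let n ≥ 1 and m ≥ 1 be naturals, let X be the type of Boolean strings of length n, and let F be a nonempty finite set of functions X → Bool with 2·|F| ≤ 2^m. Then for every f ∈ F, with probability at least 1/(4·m²) over a uniformly random triple (i, r, x) ∈ Fin m × (Fin m → Bool) × (Fin m → X), the predictor g_{i,r,x} built from the consistency distinguisher D_F satisfies: the probability over a uniformly random y ∈ X that g_{i,r,x}(y) = f(y) is at least 1/2 + 1/(4·m). -/

import Mathlib

open scoped Classical

/-- Probability of a predicate under the uniform distribution on a finite type. -/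
noncomputable def pr {α : Type*} [Fintype α] (p : α → Prop) : ℝ :=
  ((Finset.univ.filter p).card : ℝ) / (Fintype.card α)

/-- The consistency distinguisher `D_F`: accepts iff no `f ∈ F` is consistent
with the given sample list. -/
noncomputable def consistencyDistinguisher {n m : ℕ}
    (F : Finset ((Fin n → Bool) → Bool)) (z : Fin m → (Fin n → Bool) × Bool) : Bool :=
  decide (¬ ∃ f ∈ F, ∀ i : Fin m, (z i).2 = f ((z i).1))

/-- The sample list used by the predictor: the `j`-th entry is `(x j, f (x j))`
for `j < i`, `(y, r i)` for `j = i`, and `(x j, r j)` for `j > i`. -/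
def predSample {n m : ℕ} (f : (Fin n → Bool) → Bool) (i : Fin m)
    (r : Fin m → Bool) (x : Fin m → (Fin n → Bool)) (y : Fin n → Bool) :
    Fin m → (Fin n → Bool) × Bool :=
  fun j => if (j : ℕ) < (i : ℕ) then (x j, f (x j))
    else if j = i then (y, r i) else (x j, r j)

/-- The `(D, f)`-predictor `g_{i,r,x}`. -/
def predictor {n m : ℕ} (f : (Fin n → Bool) → Bool)
    (D : (Fin m → (Fin n → Bool) × Bool) → Bool) (i : Fin m)
    (r : Fin m → Bool) (x : Fin m → (Fin n → Bool)) (y : Fin n → Bool) : Bool :=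
  if D (predSample f i r x y) = true then !(r i) else r i

/-!
The hybrid argument. Let `H_k(r, x)` be the sample list labelled by `f` in its first `k` positions
and by the random bits `r` in the others, and let `A_k` count the `(r, x)` on which `D` accepts
`H_k`; write `N` for the number of pairs `(r, x)`. Since `predSample` ignores `x i`, exchanging `y`
with `x i` turns the predictor's sample into `H_i(r, x)`, and flipping `r i` matches the pairs with
`r i = f (x i)`, on which `H_i = H_{i+1}`, with the others. Together this shows that for every `D`
the success probabilities of the predictors at position `i` sum over `(r, x)` to
`N / 2 + A_i - A_{i+1}`, and summing over `i` telescopes to `m N / 2 + A_0 - A_m`.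

For the consistency distinguisher `A_m = 0`, because `f ∈ F` is consistent with `H_m`, and
`A_0 ≥ N / 2`, because at most `|F| |X|^m ≤ N / 2` labellings are consistent with a member of `F`.
So the success probability averages at least `1/2 + 1/(2m)` over `(i, r, x)`; being at most `1`,
it is at least `1/2 + 1/(4m)` on a fraction `1/(4m)` of the triples.
-/

open Finset Function

lemma pr_eq_card_div {α : Type*} [Fintype α] (p : α → Prop) [DecidablePred p] :
    pr p = (#{a | p a} : ℝ) / Fintype.card α := by
  unfold pr
  congr

lemma pr_le_one {α : Type*} [Fintype α] (p : α → Prop) : pr p ≤ 1 := by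
  unfold pr
  exact div_le_one_of_le₀ (mod_cast card_le_univ _) (Nat.cast_nonneg _)

lemma sum_le_card_filter_add_mul_card {Ω : Type*} [Fintype Ω] (q : Ω → ℝ)
    (hq : ∀ t, q t ≤ 1) {c : ℝ} (hc : 0 ≤ c) :
    ∑ t, q t ≤ #{t | c ≤ q t} + c * Fintype.card Ω := by
  rw [← sum_filter_add_sum_filter_not univ (fun t => c ≤ q t)]
  have hgood : ∑ t ∈ {t | c ≤ q t}, q t ≤ #{t | c ≤ q t} := by
    simpa using sum_le_card_nsmul _ q 1 fun t _ => hq t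
  have hbad : ∑ t ∈ {t | ¬ c ≤ q t}, q t ≤ #{t | ¬ c ≤ q t} * c := by
    simpa using sum_le_card_nsmul _ q c fun t ht => (not_le.1 (mem_filter.1 ht).2).le
  have hcard : (#{t | ¬ c ≤ q t} : ℝ) ≤ Fintype.card Ω := mod_cast card_le_univ _
  nlinarith

lemma sum_div_card_sub_le_pr {Ω : Type*} [Fintype Ω] (q : Ω → ℝ) (hq : ∀ t, q t ≤ 1) {c : ℝ}
    (hc : 0 ≤ c) : (∑ t, q t) / Fintype.card Ω - c ≤ pr fun t => c ≤ q t := by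
  rcases (Fintype.card Ω).eq_zero_or_pos with hΩ | hΩ
  · have hpr : 0 ≤ pr fun t => c ≤ q t := by unfold pr; positivity
    simp only [hΩ, Nat.cast_zero, div_zero, zero_sub]
    linarith
  rw [pr_eq_card_div, sub_le_iff_le_add, div_le_iff₀ (by positivity), add_mul,
    div_mul_cancel₀ _ (by positivity)]
  exact sum_le_card_filter_add_mul_card q hq hc

def exchangeAt {m : ℕ} {α β : Type*} (i : Fin m) : Equiv.Perm ((β × (Fin m → α)) × α) :=
  Involutive.toPerm (fun t => ((t.1.1, update t.1.2 i t.2), t.1.2 i)) fun t => by simp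

@[simp]
lemma exchangeAt_apply {m : ℕ} {α β : Type*} (i : Fin m) (t : (β × (Fin m → α)) × α) :
    exchangeAt i t = ((t.1.1, update t.1.2 i t.2), t.1.2 i) :=
  rfl

def flipAt {m : ℕ} {β : Type*} (i : Fin m) : Equiv.Perm ((Fin m → Bool) × β) :=
  Involutive.toPerm (fun p => (update p.1 i (!p.1 i), p.2)) fun p => by simp

@[simp]
lemma flipAt_apply {m : ℕ} {β : Type*} (i : Fin m) (p : (Fin m → Bool) × β) :
    flipAt i p = (update p.1 i (!p.1 i), p.2) :=
  rfl

lemma two_mul_card_add_two_mul_card_eq {α : Type*} [Fintype α] (σ : α ≃ α) (b E G : α → Bool)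
    (hb : ∀ a, b (σ a) = !b a) (hG : ∀ a, G (σ a) = G a)
    (hEG : ∀ a, b a = false → E a = G a) :
    2 * #{a | E a = b a} + 2 * #{a | G a = true} = Fintype.card α + 2 * #{a | E a = true} := by
  set ψ : α → ℕ := fun a => (if E a = b a then 1 else 0) + if G a = true then 1 else 0
  set χ : α → ℕ := fun a => if E a = true then 1 else 0
  have hpair : ∀ a, ψ a + ψ (σ a) = 1 + χ a + χ (σ a) := by
    intro a
    have hba := hb a
    have hGa := hG a
    cases h : b a
    · have := hEG a h
      simp only [ψ, χ, h, hGa, this] at hba ⊢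
      cases G a <;> cases E (σ a) <;> simp [hba]
    · have := hEG (σ a) (by simp [hba, h])
      simp only [ψ, χ, h, hGa, this] at hba ⊢
      cases G a <;> cases E a <;> simp [hba]
  calc 2 * #{a | E a = b a} + 2 * #{a | G a = true}
      = ∑ a, (ψ a + ψ (σ a)) := by
        rw [sum_add_distrib, Equiv.sum_comp σ ψ, ← two_mul, card_filter, card_filter, ← mul_add,
          ← sum_add_distrib]
    _ = ∑ a, (1 + χ a + χ (σ a)) := sum_congr rfl fun a _ => hpair a
    _ = Fintype.card α + 2 * #{a | E a = true} := by
        rw [sum_add_distrib, sum_add_distrib, Equiv.sum_comp σ χ, card_filter]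
        simp only [sum_const, card_univ, smul_eq_mul, mul_one, χ]
        ring

section Hybrid

variable {n m : ℕ}

def hybridSample (f : (Fin n → Bool) → Bool) (k : ℕ) (r : Fin m → Bool)
    (x : Fin m → Fin n → Bool) : Fin m → (Fin n → Bool) × Bool :=
  fun j => (x j, if (j : ℕ) < k then f (x j) else r j)

def acceptCount (D : (Fin m → (Fin n → Bool) × Bool) → Bool) (f : (Fin n → Bool) → Bool)
    (k : ℕ) : ℕ :=
  #{p : (Fin m → Bool) × (Fin m → Fin n → Bool) | D (hybridSample f k p.1 p.2) = true}

lemma predSample_eq_hybridSample (f : (Fin n → Bool) → Bool) (i : Fin m) (r : Fin m → Bool)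
    (x : Fin m → Fin n → Bool) (y : Fin n → Bool) :
    predSample f i r x y = hybridSample f i r (update x i y) := by
  funext j
  rcases lt_trichotomy j i with h | rfl | h
  · simp [predSample, hybridSample, h, h.ne]
  · simp [predSample, hybridSample]
  · simp [predSample, hybridSample, h.ne', not_lt.2 h.le]

lemma hybridSample_succ_of_eq (f : (Fin n → Bool) → Bool) {i : Fin m} {r : Fin m → Bool}
    {x : Fin m → Fin n → Bool} (h : r i = f (x i)) :
    hybridSample f (i + 1) r x = hybridSample f i r x := by
  funext j
  rcases lt_trichotomy j i with hj | rfl | hj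
  · simp [hybridSample, hj, Nat.lt_succ_of_lt hj]
  · simp [hybridSample, h]
  · simp [hybridSample, not_lt.2 hj.le, not_le.2 hj]

lemma hybridSample_succ_update (f : (Fin n → Bool) → Bool) (i : Fin m) (r : Fin m → Bool)
    (x : Fin m → Fin n → Bool) (b : Bool) :
    hybridSample f (i + 1) (update r i b) x = hybridSample f (i + 1) r x := by
  funext j
  by_cases hj : (j : ℕ) < i + 1
  · simp [hybridSample, hj]
  · have hji : j ≠ i := fun h => hj (h ▸ Nat.lt_succ_self _)
    simp [hybridSample, hj, hji]

lemma predictor_eq_iff (f : (Fin n → Bool) → Bool) (D : (Fin m → (Fin n → Bool) × Bool) → Bool)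
    (i : Fin m) (r : Fin m → Bool) (x : Fin m → Fin n → Bool) (y : Fin n → Bool) :
    predictor f D i r x y = f y ↔ D (predSample f i r x y) = (r i ^^ f y) := by
  unfold predictor
  cases D (predSample f i r x y) <;> cases r i <;> cases f y <;> simp

variable (D : (Fin m → (Fin n → Bool) × Bool) → Bool) (f : (Fin n → Bool) → Bool)

lemma sum_card_predictor_eq (i : Fin m) :
    ∑ p : (Fin m → Bool) × (Fin m → Fin n → Bool), #{y | predictor f D i p.1 p.2 y = f y}
      = Fintype.card (Fin n → Bool) *
          #{p : (Fin m → Bool) × (Fin m → Fin n → Bool) |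
            D (hybridSample f i p.1 p.2) = (p.1 i ^^ f (p.2 i))} := by
  set Q : (Fin m → Bool) × (Fin m → Fin n → Bool) → Prop :=
    fun p => D (hybridSample f i p.1 p.2) = (p.1 i ^^ f (p.2 i))
  have hQ : ∀ t, predictor f D i t.1.1 t.1.2 t.2 = f t.2 ↔ Q (exchangeAt i t).1 := fun t => by
    simp [predictor_eq_iff, predSample_eq_hybridSample, Q]
  calc ∑ p : (Fin m → Bool) × (Fin m → Fin n → Bool), #{y | predictor f D i p.1 p.2 y = f y}
      = #{t : ((Fin m → Bool) × (Fin m → Fin n → Bool)) × (Fin n → Bool) |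
          predictor f D i t.1.1 t.1.2 t.2 = f t.2} := by
        simp only [card_filter, Fintype.sum_prod_type]
    _ = #{t : ((Fin m → Bool) × (Fin m → Fin n → Bool)) × (Fin n → Bool) | Q t.1} :=
        card_equiv (exchangeAt i) fun t => by simp only [mem_filter, mem_univ, true_and, hQ]
    _ = #((univ.filter Q) ×ˢ (univ : Finset (Fin n → Bool))) := by
        rw [← filter_product_left, univ_product_univ]
    _ = Fintype.card (Fin n → Bool) * #{p | Q p} := by
        rw [card_product, card_univ, mul_comm]

lemma hybrid_step (i : Fin m) :
    2 * #{p : (Fin m → Bool) × (Fin m → Fin n → Bool) |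
        D (hybridSample f i p.1 p.2) = (p.1 i ^^ f (p.2 i))} + 2 * acceptCount D f (i + 1)
      = Fintype.card ((Fin m → Bool) × (Fin m → Fin n → Bool)) + 2 * acceptCount D f i :=
  two_mul_card_add_two_mul_card_eq (flipAt i)
    (fun p : (Fin m → Bool) × (Fin m → Fin n → Bool) => p.1 i ^^ f (p.2 i))
    (fun p => D (hybridSample f i p.1 p.2)) (fun p => D (hybridSample f (i + 1) p.1 p.2))
    (fun p => by simp)
    (fun p => by simp [hybridSample_succ_update])
    (fun p h => by rw [hybridSample_succ_of_eq f (by simpa using h)])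

lemma sum_pr_predictor_eq (i : Fin m) :
    ∑ p : (Fin m → Bool) × (Fin m → Fin n → Bool), pr (fun y => predictor f D i p.1 p.2 y = f y)
      = Fintype.card ((Fin m → Bool) × (Fin m → Fin n → Bool)) / 2
        + acceptCount D f i - acceptCount D f (i + 1) := by
  have hX : (Fintype.card (Fin n → Bool) : ℝ) ≠ 0 := by positivity
  have hstep := congrArg (Nat.cast : ℕ → ℝ) (hybrid_step D f i)
  push_cast at hstep
  simp only [pr_eq_card_div]
  rw [← sum_div, ← Nat.cast_sum, sum_card_predictor_eq, Nat.cast_mul, mul_div_cancel_left₀ _ hX]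
  linarith

lemma sum_pr_predictor_prod_eq :
    ∑ t : Fin m × (Fin m → Bool) × (Fin m → Fin n → Bool),
        pr (fun y => predictor f D t.1 t.2.1 t.2.2 y = f y)
      = m * Fintype.card ((Fin m → Bool) × (Fin m → Fin n → Bool)) / 2
        + acceptCount D f 0 - acceptCount D f m := by
  rw [Fintype.sum_prod_type]
  simp only [sum_pr_predictor_eq]
  rw [Fin.sum_univ_eq_sum_range
    (fun i => _ / 2 + (acceptCount D f i : ℝ) - acceptCount D f (i + 1))]
  simp only [add_sub_assoc, sum_add_distrib, sum_range_sub', sum_const, card_range, nsmul_eq_mul]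
  ring

end Hybrid

section Consistency

variable {n m : ℕ} (F : Finset ((Fin n → Bool) → Bool)) (f : (Fin n → Bool) → Bool)

lemma acceptCount_consistencyDistinguisher_eq_zero (hf : f ∈ F) :
    acceptCount (consistencyDistinguisher (m := m) F) f m = 0 := by
  rw [acceptCount, card_eq_zero, filter_eq_empty_iff]
  intro p _
  simp only [consistencyDistinguisher, decide_eq_true_eq, not_not]
  exact ⟨f, hf, fun j => by simp [hybridSample]⟩

lemma card_le_two_mul_acceptCount_consistencyDistinguisher (hsize : 2 * #F ≤ 2 ^ m) :
    Fintype.card ((Fin m → Bool) × (Fin m → Fin n → Bool))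
      ≤ 2 * acceptCount (consistencyDistinguisher (m := m) F) f 0 := by
  set K := Fintype.card (Fin m → Fin n → Bool)
  have hrejected : #{p : (Fin m → Bool) × (Fin m → Fin n → Bool) |
      ¬ consistencyDistinguisher F (hybridSample f 0 p.1 p.2) = true} ≤ #F * K :=
    calc _ ≤ #((F ×ˢ univ).image fun gx : _ × (Fin m → Fin n → Bool) => (gx.1 ∘ gx.2, gx.2)) := by
          refine card_le_card fun p hp => ?_
          obtain ⟨g, hg, hgp⟩ : ∃ g ∈ F, ∀ j, p.1 j = g (p.2 j) := by
            simpa [consistencyDistinguisher, hybridSample] using (mem_filter.1 hp).2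
          exact mem_image.2 ⟨(g, p.2), by simp [hg], Prod.ext (funext fun j => (hgp j).symm) rfl⟩
      _ ≤ #(F ×ˢ (univ : Finset (Fin m → Fin n → Bool))) := card_image_le
      _ = #F * K := by rw [card_product, card_univ]
  have hsplit := card_filter_add_card_filter_not (s := univ)
    fun p : (Fin m → Bool) × (Fin m → Fin n → Bool) =>
      consistencyDistinguisher F (hybridSample f 0 p.1 p.2) = true
  have hcard : Fintype.card ((Fin m → Bool) × (Fin m → Fin n → Bool)) = 2 ^ m * K := by
    simp [K]
  have hF : 2 * #F * K ≤ 2 ^ m * K := Nat.mul_le_mul_right K hsize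
  rw [card_univ] at hsplit
  rw [acceptCount]
  nlinarith

end Consistency

theorem stmt4_general {n m : ℕ} (hm : 1 ≤ m)
    (F : Finset ((Fin n → Bool) → Bool))
    (hsize : 2 * F.card ≤ 2 ^ m) :
    ∀ f ∈ F,
      pr (fun t : Fin m × (Fin m → Bool) × (Fin m → (Fin n → Bool)) =>
          pr (fun y : Fin n → Bool =>
              predictor f (consistencyDistinguisher (m := m) F) t.1 t.2.1 t.2.2 y = f y)
            ≥ 1 / 2 + 1 / (4 * m))
        ≥ 1 / (4 * m ^ 2) := by
  intro f hf
  have hm' : (1 : ℝ) ≤ m := mod_cast hm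
  have hsum := sum_pr_predictor_prod_eq (consistencyDistinguisher (m := m) F) f
  have hA : (Fintype.card ((Fin m → Bool) × (Fin m → Fin n → Bool)) : ℝ)
      ≤ 2 * (acceptCount (consistencyDistinguisher (m := m) F) f 0 : ℝ) :=
    mod_cast card_le_two_mul_acceptCount_consistencyDistinguisher F f hsize
  rw [acceptCount_consistencyDistinguisher_eq_zero F f hf] at hsum
  refine le_trans ?_ (sum_div_card_sub_le_pr _ (fun _ => pr_le_one _) (by positivity))
  rw [hsum, Fintype.card_prod (Fin m), Fintype.card_fin, Nat.cast_mul, Nat.cast_zero, sub_zero]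
  have hN : (0 : ℝ) < Fintype.card ((Fin m → Bool) × (Fin m → Fin n → Bool)) := by positivity
  generalize (Fintype.card ((Fin m → Bool) × (Fin m → Fin n → Bool)) : ℝ) = N at *
  generalize (acceptCount (consistencyDistinguisher (m := m) F) f 0 : ℝ) = A at *
  have hmean : 1 / 2 + 1 / (2 * m) ≤ (m * N / 2 + A) / (m * N) := by
    rw [le_div_iff₀ (by positivity)]
    have : (1 / 2 + 1 / (2 * m)) * (m * N) = m * N / 2 + N / 2 := by field_simp
    linarith
  have hgap : 1 / 2 + 1 / (2 * m) - (1 / 2 + 1 / (4 * m)) = 1 / (4 * (m : ℝ)) := by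
    field_simp; ring
  have hm2 : 1 / (4 * (m : ℝ) ^ 2) ≤ 1 / (4 * m) :=
    one_div_le_one_div_of_le (by positivity) (by nlinarith)
  linarith

theorem stmt4 {n m : ℕ} (hn : 1 ≤ n) (hm : 1 ≤ m)
    (F : Finset ((Fin n → Bool) → Bool)) (hF : F.Nonempty)
    (hsize : 2 * F.card ≤ 2 ^ m) :
    ∀ f ∈ F,
      pr (fun t : Fin m × (Fin m → Bool) × (Fin m → (Fin n → Bool)) =>
          pr (fun y : Fin n → Bool =>
              predictor f (consistencyDistinguisher (m := m) F) t.1 t.2.1 t.2.2 y = f y)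
            ≥ 1 / 2 + 1 / (4 * m))
        ≥ 1 / (4 * m ^ 2) :=
  stmt4_general hm F hsize
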